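/- Under Assumptions (A2), if additionally √n · h_n → 0 as n → ∞, then for every x ∈ T the rescaled bias of the non-normalized estimator vanishes: √n | E[f̃_n(x)] − f(x) | ≤ 3 √n · sup_{x∈T} P(Z_{x,h_n} ≠ x) → 0 as n → ∞. -/

import Mathlib

open MeasureTheory ProbabilityTheory Filter Topology

/-!
The bias at `x` is `∑ₜ f t * K_x t - f x`; splitting off `t = x` bounds its absolute value by the
missing mass `1 - K_x x = P(Z_x ≠ x)`. Every other atom of `Z_x` lies at distance at least `α`
from `x`, so Chebyshev's inequality about `x` gives
`α² (1 - K_x x) ≤ Var Z_x + (E Z_x - x)² = O(h_n)` uniformly on `T` by (A2), and `√n h_n → 0`.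
-/

section ProbabilityMassFunction

variable {ι : Type*} {k : ι → ℝ}

theorem le_one_of_hasSum_one (hk0 : ∀ i, 0 ≤ k i) (hk1 : HasSum k 1) (i : ι) : k i ≤ 1 :=
  le_hasSum hk1 i fun j _ => hk0 j

theorem hasSum_update_zero_one_sub [DecidableEq ι] (hk1 : HasSum k 1) (i : ι) :
    HasSum (Function.update k i 0) (1 - k i) := by
  simpa [sub_eq_neg_add] using hk1.update i 0

theorem abs_tsum_mul_sub_le_one_sub {f : ι → ℝ} (hf0 : ∀ i, 0 ≤ f i) (hf1 : HasSum f 1)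
    (hk0 : ∀ i, 0 ≤ k i) (hk1 : HasSum k 1) (i : ι) :
    |∑' j, f j * k j - f i| ≤ 1 - k i := by
  classical
  have hfk : Summable fun j => f j * k j :=
    hf1.summable.of_nonneg_of_le (fun j => mul_nonneg (hf0 j) (hk0 j))
      fun j => mul_le_of_le_one_right (hf0 j) (le_one_of_hasSum_one hk0 hk1 j)
  have hrest := hfk.hasSum.update i 0
  have hrest0 : 0 ≤ 0 - f i * k i + ∑' j, f j * k j := hrest.nonneg fun j => by
    rw [Function.update_apply]
    split_ifs
    exacts [le_rfl, mul_nonneg (hf0 j) (hk0 j)]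
  have hrest1 : 0 - f i * k i + ∑' j, f j * k j ≤ 1 - k i :=
    hasSum_le (fun j => by
      simp only [Function.update_apply]
      split_ifs
      exacts [le_rfl, mul_le_of_le_one_left (hk0 j) (le_one_of_hasSum_one hf0 hf1 j)])
      hrest (hasSum_update_zero_one_sub hk1 i)
  have hfi : f i * (1 - k i) ≤ 1 - k i :=
    mul_le_of_le_one_left (sub_nonneg.mpr (le_one_of_hasSum_one hk0 hk1 i))
      (le_one_of_hasSum_one hf0 hf1 i)
  have hfi0 : 0 ≤ f i * (1 - k i) :=
    mul_nonneg (hf0 i) (sub_nonneg.mpr (le_one_of_hasSum_one hk0 hk1 i))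
  -- the difference is `R - f i * (1 - k i)` with both `R = ∑_{j ≠ i} f j k j` and
  -- `f i * (1 - k i)` in `[0, 1 - k i]`
  rw [abs_le]
  constructor <;> linarith

end ProbabilityMassFunction

theorem integral_comp_eq_tsum_mul {Ω α : Type*} [MeasurableSpace Ω] [MeasurableSpace α]
    [MeasurableSingletonClass α] {P : Measure Ω} [IsProbabilityMeasure P] {X : Ω → α}
    (hX : Measurable X) {f : α → ℝ} (hf0 : ∀ a, 0 ≤ f a) (hf1 : HasSum f 1)
    (hXf : ∀ a, P (X ⁻¹' {a}) = ENNReal.ofReal (f a)) {g : α → ℝ}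
    (hg : Integrable g (P.map X)) :
    ∫ ω, g (X ω) ∂P = ∑' a, f a * g a := by
  set C := Function.support f
  have hC : C.Countable := hf1.summable.countable_support
  have hfC : HasSum (fun a : C => f a) 1 :=
    (hasSum_subtype_iff_of_support_subset subset_rfl).mpr hf1
  have hPC : P.map X C = 1 := by
    rw [Measure.map_apply hX hC.measurableSet, ← tsum_measure_preimage_singleton hC
      fun a _ => hX (measurableSet_singleton a)]
    simp only [hXf]
    rw [← ENNReal.ofReal_tsum_of_nonneg (fun a : C => hf0 a) hfC.summable, hfC.tsum_eq,
      ENNReal.ofReal_one]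
  have : IsProbabilityMeasure (P.map X) := Measure.isProbabilityMeasure_map hX.aemeasurable
  have hae : ∀ᵐ a ∂(P.map X), a ∈ C :=
    (prob_compl_eq_zero_iff hC.measurableSet).mpr hPC
  calc ∫ ω, g (X ω) ∂P = ∫ a in C, g a ∂(P.map X) := by
        rw [Measure.restrict_eq_self_of_ae_mem hae,
          integral_map hX.aemeasurable hg.aestronglyMeasurable]
    _ = ∑' a : C, f a * g a := by
        rw [setIntegral_countable g hC hg.integrableOn]
        congr 1 with a
        rw [measureReal_def, Measure.map_apply hX (measurableSet_singleton _), hXf,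
          ENNReal.toReal_ofReal (hf0 a), smul_eq_mul]
    _ = ∑' a, f a * g a :=
        tsum_subtype_eq_of_support_subset (Function.support_mul_subset_left f g)

theorem abs_integral_comp_sub_le_one_sub {Ω α : Type*} [MeasurableSpace Ω] [MeasurableSpace α]
    [MeasurableSingletonClass α] {P : Measure Ω} [IsProbabilityMeasure P] {X : Ω → α}
    (hX : Measurable X) {f : α → ℝ} (hf0 : ∀ a, 0 ≤ f a) (hf1 : HasSum f 1)
    (hXf : ∀ a, P (X ⁻¹' {a}) = ENNReal.ofReal (f a)) {k : α → ℝ} (hk : Measurable k)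
    (hk0 : ∀ a, 0 ≤ k a) (hk1 : HasSum k 1) (a : α) :
    |∫ ω, k (X ω) ∂P - f a| ≤ 1 - k a := by
  have hint : Integrable k (P.map X) :=
    .of_bound hk.aestronglyMeasurable 1 (ae_of_all _ fun b => by
      rw [Real.norm_eq_abs, abs_of_nonneg (hk0 b)]
      exact le_one_of_hasSum_one hk0 hk1 b)
  rw [integral_comp_eq_tsum_mul hX hf0 hf1 hXf hint]
  exact abs_tsum_mul_sub_le_one_sub hf0 hf1 hk0 hk1 a

section Chebyshev

variable {k : ℝ → ℝ} {E V : ℝ}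

theorem hasSum_mul_sub_sq (hk1 : HasSum k 1) (hE : HasSum (fun z => k z * z) E)
    (hV : HasSum (fun z => k z * (z - E) ^ 2) V) (y : ℝ) :
    HasSum (fun z => k z * (z - y) ^ 2) (V + (E - y) ^ 2) := by
  convert (hV.add ((hE.sub (hk1.mul_left E)).mul_left (2 * (E - y)))).add
    (hk1.mul_left ((E - y) ^ 2)) using 1
  · ext z
    ring
  · ring

theorem sq_mul_one_sub_le_of_separated (hk0 : ∀ z, 0 ≤ k z) (hk1 : HasSum k 1) {y α M : ℝ}
    (hα : 0 ≤ α) (hsep : ∀ z ≠ y, k z ≠ 0 → α ≤ |z - y|)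
    (hM : HasSum (fun z => k z * (z - y) ^ 2) M) :
    α ^ 2 * (1 - k y) ≤ M := by
  classical
  refine hasSum_le (fun z => ?_) ((hasSum_update_zero_one_sub hk1 y).mul_left (α ^ 2)) hM
  rcases eq_or_ne z y with rfl | hzy
  · simp
  rcases eq_or_ne (k z) 0 with hkz | hkz
  · simp [Function.update_of_ne hzy, hkz]
  have hαz : α ^ 2 ≤ (z - y) ^ 2 := by
    rw [← sq_abs (z - y)]
    exact pow_le_pow_left₀ hα (hsep z hzy hkz) 2
  rw [Function.update_of_ne hzy, mul_comm]
  exact mul_le_mul_of_nonneg_left hαz (hk0 z)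

theorem one_sub_le_div_sq_of_separated (hk0 : ∀ z, 0 ≤ k z) (hk1 : HasSum k 1) {y α a b : ℝ}
    (hα : 0 < α) (hsep : ∀ z ≠ y, k z ≠ 0 → α ≤ |z - y|) (hE : HasSum (fun z => k z * z) E)
    (hV : HasSum (fun z => k z * (z - E) ^ 2) V) (hVa : V ≤ a) (hEb : |E - y| ≤ b) :
    1 - k y ≤ (a + b ^ 2) / α ^ 2 := by
  have hmoment :=
    sq_mul_one_sub_le_of_separated hk0 hk1 hα.le hsep (hasSum_mul_sub_sq hk1 hE hV y)
  have hbias : (E - y) ^ 2 ≤ b ^ 2 := sq_le_sq' (abs_le.mp hEb).1 (abs_le.mp hEb).2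
  rw [le_div_iff₀' (by positivity)]
  linarith

end Chebyshev

theorem tendsto_sqrt_mul_iSup_of_le {ι : Type*} [Nonempty ι] {p : ℕ → ι → ℝ}
    (hp0 : ∀ n i, 0 ≤ p n i) {H : ℕ → ℝ} (hH0 : Tendsto H atTop (𝓝 0))
    (hroot : Tendsto (fun n : ℕ => √n * H n) atTop (𝓝 0)) {a b c : ℝ}
    (hp : ∀ᶠ n in atTop, ∀ i, p n i ≤ (a * H n + (b * H n) ^ 2) / c) :
    Tendsto (fun n : ℕ => √n * ⨆ i, p n i) atTop (𝓝 0) := by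
  have hbound : Tendsto (fun n : ℕ => √n * ((a * H n + (b * H n) ^ 2) / c)) atTop (𝓝 0) := by
    convert ((hroot.const_mul a).add ((hroot.mul hH0).const_mul (b ^ 2))).div_const c using 1
    · ext n
      ring
    · simp
  refine tendsto_of_tendsto_of_tendsto_of_le_of_le' tendsto_const_nhds hbound
    (Eventually.of_forall fun n => mul_nonneg (Real.sqrt_nonneg _) (Real.iSup_nonneg (hp0 n))) ?_
  filter_upwards [hp] with n hn
  exact mul_le_mul_of_nonneg_left (ciSup_le hn) (Real.sqrt_nonneg _)

theorem rescaled_bias_vanishes_general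
    {Ω : Type*} [MeasurableSpace Ω] (P : Measure Ω) [IsProbabilityMeasure P]
    (T : Set ℝ)
    (f : ℝ → ℝ) (hf0 : ∀ x, 0 ≤ f x) (hf1 : HasSum f 1)
    (S : ℝ → Set ℝ)
    (K : ℝ → ℝ → ℝ → ℝ)
    (hK0 : ∀ x ∈ T, ∀ h > (0:ℝ), ∀ z, 0 ≤ K x h z)
    (hKS : ∀ x ∈ T, ∀ h > (0:ℝ), ∀ z ∉ S x, K x h z = 0)
    (hK1 : ∀ x ∈ T, ∀ h > (0:ℝ), HasSum (K x h) 1)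
    (hKm : ∀ x h, Measurable (K x h))
    (α : ℝ) (hα : 0 < α)
    (hsep : ∀ x ∈ T, ∀ z ∈ (T ∪ S x) \ {x}, α ≤ |z - x|)
    (H : ℕ → ℝ) (hH : ∀ n, 0 < H n) (hH0 : Tendsto H atTop (𝓝 0))
    (X1 : Ω → ℝ) (hX1m : Measurable X1)
    (hX1d : ∀ x : ℝ, P (X1 ⁻¹' {x}) = ENNReal.ofReal (f x))
    (EZ VZ : ℝ → ℝ → ℝ)
    (hEZ : ∀ x ∈ T, ∀ h > (0:ℝ), HasSum (fun z : ℝ => K x h z * z) (EZ x h))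
    (hVZ : ∀ x ∈ T, ∀ h > (0:ℝ), HasSum (fun z : ℝ => K x h z * (z - EZ x h) ^ 2) (VZ x h))
    (hA2E : ∃ c > (0:ℝ), ∃ N : ℕ, ∀ n ≥ N, ∀ x ∈ T, |EZ x (H n) - x| ≤ c * H n)
    (hA2V : ∃ c > (0:ℝ), ∃ N : ℕ, ∀ n ≥ N, ∀ x ∈ T, VZ x (H n) ≤ c * H n)
    (hroot : Tendsto (fun n : ℕ => Real.sqrt n * H n) atTop (𝓝 0)) :
    ∀ x ∈ T,
      (∀ n : ℕ, Real.sqrt n * |(∫ ω, K x (H n) (X1 ω) ∂P) - f x| ≤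
        3 * Real.sqrt n * ⨆ y : T, (1 - K (y:ℝ) (H n) (y:ℝ))) ∧
      Tendsto (fun n : ℕ => 3 * Real.sqrt n * ⨆ y : T, (1 - K (y:ℝ) (H n) (y:ℝ))) atTop (𝓝 0) ∧
      Tendsto (fun n : ℕ => Real.sqrt n * |(∫ ω, K x (H n) (X1 ω) ∂P) - f x|) atTop (𝓝 0) := by
  intro x hx
  obtain ⟨c₁, -, N₁, hN₁⟩ := hA2E
  obtain ⟨c₂, -, N₂, hN₂⟩ := hA2V
  have : Nonempty T := ⟨⟨x, hx⟩⟩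
  have hK0' (y : T) (n : ℕ) := hK0 y y.2 _ (hH n)
  have hK1' (y : T) (n : ℕ) := hK1 y y.2 _ (hH n)
  have hmiss_nonneg (n : ℕ) (y : T) : 0 ≤ 1 - K y (H n) y :=
    sub_nonneg.mpr (le_one_of_hasSum_one (hK0' y n) (hK1' y n) y)
  have hmiss : ∀ᶠ n in atTop, ∀ y : T,
      1 - K y (H n) y ≤ (c₂ * H n + (c₁ * H n) ^ 2) / α ^ 2 := by
    filter_upwards [eventually_ge_atTop (max N₁ N₂)] with n hn y
    refine one_sub_le_div_sq_of_separated (hK0' y n) (hK1' y n) hα (fun z hz hKz =>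
      hsep y y.2 z ⟨Or.inr (not_imp_comm.mp (hKS y y.2 _ (hH n) z) hKz), hz⟩)
      (hEZ y y.2 _ (hH n)) (hVZ y y.2 _ (hH n)) (hN₂ n (le_of_max_le_right hn) y y.2)
      (hN₁ n (le_of_max_le_left hn) y y.2)
  have hlim := (tendsto_sqrt_mul_iSup_of_le hmiss_nonneg hH0 hroot hmiss).const_mul 3
  simp only [mul_zero, ← mul_assoc] at hlim
  have hbound (n : ℕ) : Real.sqrt n * |(∫ ω, K x (H n) (X1 ω) ∂P) - f x| ≤
      3 * Real.sqrt n * ⨆ y : T, (1 - K (y:ℝ) (H n) (y:ℝ)) := by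
    have hbias := abs_integral_comp_sub_le_one_sub hX1m hf0 hf1 hX1d (hKm x (H n))
      (hK0' ⟨x, hx⟩ n) (hK1' ⟨x, hx⟩ n) x
    have hle_iSup : 1 - K x (H n) x ≤ ⨆ y : T, (1 - K y (H n) y) :=
      le_ciSup (f := fun y : T => 1 - K y (H n) y)
        ⟨1, Set.forall_mem_range.mpr fun y => by linarith [hK0' y n y]⟩ ⟨x, hx⟩
    rw [mul_comm 3, mul_assoc]
    gcongr
    linarith [Real.iSup_nonneg (hmiss_nonneg n)]
  exact ⟨hbound, hlim, squeeze_zero (fun n => by positivity) hbound hlim⟩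

theorem rescaled_bias_vanishes
    {Ω : Type*} [MeasurableSpace Ω] (P : Measure Ω) [IsProbabilityMeasure P]
    (T : Set ℝ) (hTc : T.Countable)
    (f : ℝ → ℝ) (hf0 : ∀ x, 0 ≤ f x) (hfT : ∀ x ∉ T, f x = 0) (hf1 : HasSum f 1)
    (S : ℝ → Set ℝ) (hSc : ∀ x ∈ T, (S x).Countable)
    (K : ℝ → ℝ → ℝ → ℝ)
    (hK0 : ∀ x ∈ T, ∀ h > (0:ℝ), ∀ z, 0 ≤ K x h z)
    (hKS : ∀ x ∈ T, ∀ h > (0:ℝ), ∀ z ∉ S x, K x h z = 0)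
    (hK1 : ∀ x ∈ T, ∀ h > (0:ℝ), HasSum (K x h) 1)
    (hKm : ∀ x h, Measurable (K x h))
    (hxS : ∀ x ∈ T, x ∈ S x)
    (α : ℝ) (hα : 0 < α)
    (hsep : ∀ x ∈ T, ∀ z ∈ (T ∪ S x) \ {x}, α ≤ |z - x|)
    (H : ℕ → ℝ) (hH : ∀ n, 0 < H n) (hH0 : Tendsto H atTop (𝓝 0))
    (X1 : Ω → ℝ) (hX1m : Measurable X1)
    (hX1d : ∀ x : ℝ, P (X1 ⁻¹' {x}) = ENNReal.ofReal (f x))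
    (EZ VZ : ℝ → ℝ → ℝ)
    (hEZ : ∀ x ∈ T, ∀ h > (0:ℝ), HasSum (fun z : ℝ => K x h z * z) (EZ x h))
    (hVZ : ∀ x ∈ T, ∀ h > (0:ℝ), HasSum (fun z : ℝ => K x h z * (z - EZ x h) ^ 2) (VZ x h))
    (hA2E : ∃ c > (0:ℝ), ∃ N : ℕ, ∀ n ≥ N, ∀ x ∈ T, |EZ x (H n) - x| ≤ c * H n)
    (hA2V : ∃ c > (0:ℝ), ∃ N : ℕ, ∀ n ≥ N, ∀ x ∈ T, VZ x (H n) ≤ c * H n)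
    (hroot : Tendsto (fun n : ℕ => Real.sqrt n * H n) atTop (𝓝 0)) :
    ∀ x ∈ T,
      (∀ n : ℕ, Real.sqrt n * |(∫ ω, K x (H n) (X1 ω) ∂P) - f x| ≤
        3 * Real.sqrt n * ⨆ y : T, (1 - K (y:ℝ) (H n) (y:ℝ))) ∧
      Tendsto (fun n : ℕ => 3 * Real.sqrt n * ⨆ y : T, (1 - K (y:ℝ) (H n) (y:ℝ))) atTop (𝓝 0) ∧
      Tendsto (fun n : ℕ => Real.sqrt n * |(∫ ω, K x (H n) (X1 ω) ∂P) - f x|) atTop (𝓝 0) :=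
  rescaled_bias_vanishes_general P T f hf0 hf1 S K hK0 hKS hK1 hKm α hα hsep H hH hH0 X1 hX1m hX1d
    EZ VZ hEZ hVZ hA2E hA2V hroot
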